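/- Let X be a real or complex Hilbert space and let P : X → X be a bounded self-adjoint linear operator with ⟪Px, x⟫ ≥ m‖x‖² for all x ∈ X and some m > 0. Then there exist n ∈ ℕ with n ≥ 1 and a bounded self-adjoint linear operator Q : X → X such that Qⁿ = P, ⟪Qx, x⟫ ≥ m'‖x‖² for all x ∈ X and some m' > 0, and ‖I − Q‖ < 1/2. -/

import Mathlib

/-!
Write `P = c • (1 + T)` with `c = ‖P‖ + m`. Since `m‖x‖² ≤ re⟪P x, x⟫ ≤ ‖P‖‖x‖²` and the norm of
a self-adjoint operator is the supremum of its numerical range, `‖T‖ ≤ ‖P‖ / c < 1`. The binomial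
series `R = ∑ₖ choose(1/n, k) Tᵏ` then converges absolutely, and the formal identity
`((1 + X) ^ (1/n)) ^ n = 1 + X` passes to absolutely convergent evaluations through Cauchy products,
so `Q = c ^ (1/n) • R` is a self-adjoint `n`-th root of `P`. As `|choose(1/n, k)| ≤ 1/n` for
`k ≥ 1`, `Q → 1` when `n → ∞`; once `‖1 - Q‖ < 1/2`, coercivity of `Q` follows from
`re⟪Q x, x⟫ ≥ (1 - ‖1 - Q‖)‖x‖²`.
-/

theorem Ring.succ_nsmul_choose_succ {R : Type*} [NonAssocRing R] [Pow R ℕ] [BinomialRing R]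
    [NatPowAssoc R] (r : R) (k : ℕ) :
    (k + 1) • Ring.choose r (k + 1) = Ring.choose r k * (r - k) := by
  simpa [Nat.choose_succ_self_right, Ring.choose_one_right] using
    Ring.choose_smul_choose r (Nat.le_succ k)

section choose

variable {𝕂 : Type*} [RCLike 𝕂]

theorem Ring.norm_choose_le_norm {a : 𝕂} (ha : ‖a‖ ≤ 1) {k : ℕ} (hk : 1 ≤ k) :
    ‖Ring.choose a k‖ ≤ ‖a‖ := by
  induction k, hk using Nat.le_induction with
  | base => rw [Ring.choose_one_right]
  | succ k _ ih =>
    have hrec := congrArg norm (Ring.succ_nsmul_choose_succ a k)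
    rw [nsmul_eq_mul, norm_mul, norm_mul, RCLike.norm_natCast] at hrec
    push_cast at hrec
    have hak : ‖a - k‖ ≤ k + 1 := (norm_sub_le _ _).trans (by rw [RCLike.norm_natCast]; linarith)
    refine le_trans ?_ ih
    nlinarith [norm_nonneg (Ring.choose a k), norm_nonneg (Ring.choose a (k + 1))]

theorem Ring.norm_choose_le_one {a : 𝕂} (ha : ‖a‖ ≤ 1) (k : ℕ) : ‖Ring.choose a k‖ ≤ 1 := by
  rcases Nat.eq_zero_or_pos k with rfl | hk
  · simp
  · exact (Ring.norm_choose_le_norm ha hk).trans ha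

theorem Ring.isSelfAdjoint_choose {a : 𝕂} (ha : IsSelfAdjoint a) (k : ℕ) :
    IsSelfAdjoint (Ring.choose a k) := by
  rw [IsSelfAdjoint, RCLike.star_def, Ring.map_choose, ← RCLike.star_def, ha.star_eq]

theorem RCLike.isSelfAdjoint_ofReal (r : ℝ) : IsSelfAdjoint (r : 𝕂) :=
  RCLike.conj_ofReal r

theorem RCLike.norm_inv_natCast_le_one (n : ℕ) : ‖(n : 𝕂)⁻¹‖ ≤ 1 := by
  rw [norm_inv, RCLike.norm_natCast]
  exact Nat.cast_inv_le_one n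

end choose

namespace PowerSeries

open FormalMultilinearSeries Finset

section AbsSummable

variable {𝕂 A : Type*} [NormedField 𝕂] [NormedRing A]

def AbsSummableAt (f : 𝕂⟦X⟧) (x : A) : Prop :=
  Summable fun k ↦ ‖coeff k f‖ * ‖x ^ k‖

theorem absSummableAt_one (x : A) : (1 : 𝕂⟦X⟧).AbsSummableAt x :=
  summable_of_ne_finset_zero (s := {0}) fun k hk ↦ by simp_all [coeff_one]

theorem AbsSummableAt.mul {f g : 𝕂⟦X⟧} {x : A} (hf : f.AbsSummableAt x)
    (hg : g.AbsSummableAt x) : (f * g).AbsSummableAt x := by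
  have hprod := summable_norm_sum_mul_antidiagonal_of_summable_norm
    (f := fun k ↦ ‖coeff k f‖ * ‖x ^ k‖) (g := fun k ↦ ‖coeff k g‖ * ‖x ^ k‖)
    (summable_abs_iff.mpr hf) (summable_abs_iff.mpr hg)
  refine Summable.of_nonneg_of_le (fun _ ↦ by positivity) (fun k ↦ ?_) hprod
  calc ‖coeff k (f * g)‖ * ‖x ^ k‖
      ≤ ∑ p ∈ antidiagonal k, ‖coeff p.1 f‖ * ‖coeff p.2 g‖ * (‖x ^ p.1‖ * ‖x ^ p.2‖) := by
        rw [coeff_mul]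
        refine (mul_le_mul_of_nonneg_right (norm_sum_le _ _) (norm_nonneg _)).trans ?_
        rw [sum_mul]
        refine sum_le_sum fun p hp ↦ ?_
        rw [norm_mul, ← mem_antidiagonal.mp hp, pow_add]
        gcongr
        exact norm_mul_le _ _
    _ = ‖∑ p ∈ antidiagonal k, ‖coeff p.1 f‖ * ‖x ^ p.1‖ * (‖coeff p.2 g‖ * ‖x ^ p.2‖)‖ := by
        rw [Real.norm_of_nonneg (sum_nonneg fun _ _ ↦ by positivity)]
        exact sum_congr rfl fun _ _ ↦ by ring

theorem AbsSummableAt.pow {f : 𝕂⟦X⟧} {x : A} (hf : f.AbsSummableAt x) (n : ℕ) :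
    (f ^ n).AbsSummableAt x := by
  induction n with
  | zero => simpa using absSummableAt_one x
  | succ n ih => simpa [pow_succ] using ih.mul hf

variable [NormedAlgebra 𝕂 A]

theorem AbsSummableAt.summable_norm_smul {f : 𝕂⟦X⟧} {x : A} (hf : f.AbsSummableAt x) :
    Summable fun k ↦ ‖coeff k f • x ^ k‖ :=
  hf.of_nonneg_of_le (fun _ ↦ norm_nonneg _) fun _ ↦ norm_smul_le _ _

theorem coeff_mul_smul_pow (f g : 𝕂⟦X⟧) (x : A) (k : ℕ) :
    coeff k (f * g) • x ^ k =
      ∑ p ∈ antidiagonal k, (coeff p.1 f • x ^ p.1) * (coeff p.2 g • x ^ p.2) := by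
  rw [coeff_mul, sum_smul]
  refine sum_congr rfl fun p hp ↦ ?_
  rw [smul_mul_smul, ← pow_add, mem_antidiagonal.mp hp]

theorem ofScalarsSum_coeff_of_polynomial (p : Polynomial 𝕂) (x : A) :
    ofScalarsSum (coeff · (p : 𝕂⟦X⟧)) x = Polynomial.aeval x p := by
  rw [ofScalars_sum_eq, Polynomial.aeval_eq_sum_range, tsum_eq_sum (s := range (p.natDegree + 1))]
  · simp [Polynomial.coeff_coe]
  · intro k hk
    simp [Polynomial.coeff_eq_zero_of_natDegree_lt (by simpa using hk)]

variable [CompleteSpace A]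

theorem ofScalarsSum_coeff_mul {f g : 𝕂⟦X⟧} {x : A} (hf : f.AbsSummableAt x)
    (hg : g.AbsSummableAt x) :
    ofScalarsSum (coeff · (f * g)) x = ofScalarsSum (coeff · f) x * ofScalarsSum (coeff · g) x := by
  simp only [ofScalars_sum_eq, tsum_mul_tsum_eq_tsum_sum_antidiagonal_of_summable_norm
    hf.summable_norm_smul hg.summable_norm_smul, coeff_mul_smul_pow]

theorem ofScalarsSum_coeff_pow {f : 𝕂⟦X⟧} {x : A} (hf : f.AbsSummableAt x) (n : ℕ) :
    ofScalarsSum (coeff · (f ^ n)) x = ofScalarsSum (coeff · f) x ^ n := by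
  induction n with
  | zero => simpa using ofScalarsSum_coeff_of_polynomial (1 : Polynomial 𝕂) x
  | succ n ih => rw [pow_succ, ofScalarsSum_coeff_mul (hf.pow n) hf, ih, pow_succ]

end AbsSummable

theorem binomialSeries_nsmul {R A : Type*} [CommRing R] [BinomialRing R] [Ring A] [Algebra R A]
    (r : R) (n : ℕ) : binomialSeries A (n • r) = binomialSeries A r ^ n := by
  induction n with
  | zero => simp
  | succ n ih => rw [succ_nsmul, binomialSeries_add, ih, pow_succ]

theorem binomialSeries_inv_pow {K : Type*} [Field K] [CharZero K] {n : ℕ} (hn : n ≠ 0) :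
    binomialSeries K ((n : K)⁻¹) ^ n = 1 + X := by
  rw [← binomialSeries_nsmul, nsmul_eq_mul, mul_inv_cancel₀ (Nat.cast_ne_zero.mpr hn),
    ← Nat.cast_one, binomialSeries_nat, pow_one]

section binomial

variable {𝕂 A : Type*} [RCLike 𝕂] [NormedRing A]

theorem absSummableAt_binomialSeries {a : 𝕂} (ha : ‖a‖ ≤ 1) {x : A} (hx : ‖x‖ < 1) :
    (binomialSeries 𝕂 a).AbsSummableAt x := by
  refine (summable_nat_add_iff 1).mp <|
    (summable_geometric_of_lt_one (norm_nonneg x) hx).of_nonneg_of_le (fun _ ↦ by positivity)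
      fun k ↦ ?_
  simp only [binomialSeries_coeff, smul_eq_mul, mul_one]
  calc ‖Ring.choose a (k + 1)‖ * ‖x ^ (k + 1)‖ ≤ 1 * ‖x‖ ^ (k + 1) := by
        gcongr
        · exact Ring.norm_choose_le_one ha _
        · exact norm_pow_le' x k.succ_pos
    _ ≤ ‖x‖ ^ k := by
        rw [one_mul, pow_succ]
        exact mul_le_of_le_one_right (by positivity) hx.le

variable [NormedAlgebra 𝕂 A] [CompleteSpace A]

theorem summable_choose_smul_pow {a : 𝕂} (ha : ‖a‖ ≤ 1) {x : A} (hx : ‖x‖ < 1) :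
    Summable fun k ↦ Ring.choose a k • x ^ k := by
  simpa using (absSummableAt_binomialSeries ha hx).summable_norm_smul.of_norm

theorem ofScalarsSum_choose_inv_pow {n : ℕ} (hn : n ≠ 0) {x : A} (hx : ‖x‖ < 1) :
    ofScalarsSum (Ring.choose ((n : 𝕂)⁻¹) ·) x ^ n = 1 + x := by
  have hcoeff : (Ring.choose ((n : 𝕂)⁻¹) ·) = (coeff · (binomialSeries 𝕂 ((n : 𝕂)⁻¹))) := by
    funext k
    simp
  rw [hcoeff, ← ofScalarsSum_coeff_pow
      (absSummableAt_binomialSeries (RCLike.norm_inv_natCast_le_one n) hx),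
    binomialSeries_inv_pow hn, show (1 + X : 𝕂⟦X⟧) = ((1 + Polynomial.X : Polynomial 𝕂) : 𝕂⟦X⟧)
      by push_cast; rfl, ofScalarsSum_coeff_of_polynomial]
  simp

theorem norm_ofScalarsSum_choose_sub_one_le {a : 𝕂} (ha : ‖a‖ ≤ 1) {x : A}
    (hx : ‖x‖ < 1) : ‖ofScalarsSum (Ring.choose a ·) x - 1‖ ≤ ‖a‖ * (‖x‖ / (1 - ‖x‖)) := by
  rw [ofScalars_sum_eq, (summable_choose_smul_pow ha hx).tsum_eq_zero_add]
  simp only [Ring.choose_zero_right, pow_zero, one_smul, add_sub_cancel_left]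
  have hgeom : HasSum (fun k : ℕ ↦ ‖a‖ * ‖x‖ ^ (k + 1)) (‖a‖ * (‖x‖ / (1 - ‖x‖))) := by
    simpa only [pow_succ', mul_assoc, div_eq_mul_inv] using
      ((hasSum_geometric_of_lt_one (norm_nonneg x) hx).mul_left ‖x‖).mul_left ‖a‖
  refine tsum_of_norm_bounded hgeom fun k ↦ ?_
  grw [norm_smul_le, Ring.norm_choose_le_norm ha k.succ_pos, norm_pow_le' x k.succ_pos]

end binomial

end PowerSeries

open FormalMultilinearSeries in
theorem IsSelfAdjoint.ofScalarsSum {𝕂 A : Type*} [Field 𝕂] [StarRing 𝕂] [Ring A] [StarRing A]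
    [Algebra 𝕂 A] [StarModule 𝕂 A] [TopologicalSpace A] [IsTopologicalRing A] [ContinuousStar A]
    [T2Space A] {c : ℕ → 𝕂} (hc : ∀ k, IsSelfAdjoint (c k)) {x : A} (hx : IsSelfAdjoint x) :
    IsSelfAdjoint (ofScalarsSum c x) := by
  rw [IsSelfAdjoint, ofScalars_sum_eq, tsum_star]
  exact tsum_congr fun k ↦ by rw [star_smul, (hc k).star_eq, (hx.pow k).star_eq]

section binomialRoot

open FormalMultilinearSeries Filter Topology

variable (𝕂 : Type*) {A : Type*} [RCLike 𝕂] [NormedRing A] [NormedAlgebra 𝕂 A]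

-- `c ^ (1/n) • (1 + (c⁻¹ • y - 1)) ^ (1/n)`, the second factor given by the binomial series
noncomputable def binomialRoot (c : ℝ) (n : ℕ) (y : A) : A :=
  ((c ^ (n : ℝ)⁻¹ : ℝ) : 𝕂) • ofScalarsSum (Ring.choose ((n : 𝕂)⁻¹) ·) ((c : 𝕂)⁻¹ • y - 1)

variable {𝕂} {c : ℝ} {y : A}

theorem IsSelfAdjoint.binomialRoot [StarRing A] [StarModule 𝕂 A] [ContinuousStar A]
    (hy : IsSelfAdjoint y) (c : ℝ) (n : ℕ) : IsSelfAdjoint (binomialRoot 𝕂 c n y) := by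
  have hc : IsSelfAdjoint (c : 𝕂)⁻¹ := by
    rw [← RCLike.ofReal_inv]; exact RCLike.isSelfAdjoint_ofReal _
  have hn : IsSelfAdjoint (n : 𝕂)⁻¹ := by
    rw [← RCLike.ofReal_natCast, ← RCLike.ofReal_inv]; exact RCLike.isSelfAdjoint_ofReal _
  exact (RCLike.isSelfAdjoint_ofReal _).smul
    (.ofScalarsSum (Ring.isSelfAdjoint_choose hn) ((hc.smul hy).sub (.one A)))

variable [CompleteSpace A]

theorem binomialRoot_pow (hc : 0 < c) (hy : ‖(c : 𝕂)⁻¹ • y - 1‖ < 1) {n : ℕ} (hn : n ≠ 0) :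
    binomialRoot 𝕂 c n y ^ n = y := by
  rw [binomialRoot, smul_pow, PowerSeries.ofScalarsSum_choose_inv_pow hn hy, add_sub_cancel,
    ← RCLike.ofReal_pow, Real.rpow_inv_natCast_pow hc.le hn,
    smul_inv_smul₀ (RCLike.ofReal_ne_zero.mpr hc.ne')]

theorem tendsto_binomialRoot (hc : 0 < c) (hy : ‖(c : 𝕂)⁻¹ • y - 1‖ < 1) :
    Tendsto (fun n ↦ binomialRoot 𝕂 c n y) atTop (𝓝 1) := by
  have hinv := tendsto_inv_atTop_nhds_zero_nat (𝕜 := ℝ)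
  have hscalar : Tendsto (fun n : ℕ ↦ ((c ^ (n : ℝ)⁻¹ : ℝ) : 𝕂)) atTop (𝓝 1) := by
    simpa [Function.comp_def] using ((RCLike.continuous_ofReal (K := 𝕂)).tendsto _).comp
      ((Real.continuousAt_const_rpow hc.ne').tendsto.comp hinv)
  have hseries : Tendsto (fun n : ℕ ↦ ofScalarsSum (Ring.choose ((n : 𝕂)⁻¹) ·)
      ((c : 𝕂)⁻¹ • y - 1)) atTop (𝓝 1) := by
    refine tendsto_iff_norm_sub_tendsto_zero.mpr <| squeeze_zero (fun _ ↦ norm_nonneg _)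
      (fun n ↦ PowerSeries.norm_ofScalarsSum_choose_sub_one_le
        (RCLike.norm_inv_natCast_le_one n) hy) ?_
    simp only [norm_inv, RCLike.norm_natCast]
    simpa using hinv.mul_const _
  unfold binomialRoot
  simpa only [one_smul] using hscalar.smul hseries

end binomialRoot

namespace ContinuousLinearMap

open RCLike

variable {𝕜 X : Type*} [RCLike 𝕜] [NormedAddCommGroup X] [InnerProductSpace 𝕜 X]

theorem re_inner_apply_self_le (T : X →L[𝕜] X) (x : X) :
    re (inner 𝕜 (T x) x) ≤ ‖T‖ * ‖x‖ ^ 2 := by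
  grw [re_inner_le_norm, le_opNorm]
  rw [mul_assoc, sq]

theorem one_sub_norm_one_sub_mul_sq_le_re_inner (Q : X →L[𝕜] X) (x : X) :
    (1 - ‖1 - Q‖) * ‖x‖ ^ 2 ≤ re (inner 𝕜 (Q x) x) := by
  have hre : re (inner 𝕜 ((1 - Q) x) x) = ‖x‖ ^ 2 - re (inner 𝕜 (Q x) x) := by
    rw [sub_apply, inner_sub_left, map_sub, one_apply_eq_self, inner_self_eq_norm_sq]
  linarith [(1 - Q).re_inner_apply_self_le x]

variable [CompleteSpace X]

theorem norm_le_of_abs_re_inner_le {T : X →L[𝕜] X} (hT : IsSelfAdjoint T) {C : ℝ} (hC : 0 ≤ C)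
    (h : ∀ x, |re (inner 𝕜 (T x) x)| ≤ C * ‖x‖ ^ 2) : ‖T‖ ≤ C := by
  rw [T.norm_eq_iSup_rayleighQuotient hT.isSymmetric]
  refine ciSup_le fun x ↦ ?_
  rw [rayleighQuotient, reApplyInnerSelf_apply, abs_div, abs_sq]
  exact div_le_of_le_mul₀ (sq_nonneg _) hC (h x)

theorem norm_inv_smul_sub_one_le {P : X →L[𝕜] X} (hP : IsSelfAdjoint P) {m : ℝ} (hm : 0 < m)
    (hcoer : ∀ x, m * ‖x‖ ^ 2 ≤ re (inner 𝕜 (P x) x)) :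
    ‖((‖P‖ + m : ℝ) : 𝕜)⁻¹ • P - 1‖ ≤ ‖P‖ / (‖P‖ + m) := by
  set c := ‖P‖ + m
  have hc : 0 < c := by positivity
  have hself : IsSelfAdjoint ((c : 𝕜)⁻¹ • P - 1) := by
    refine (IsSelfAdjoint.smul ?_ hP).sub (.one _)
    rw [← ofReal_inv]
    exact isSelfAdjoint_ofReal _
  refine norm_le_of_abs_re_inner_le hself (by positivity) fun x ↦ ?_
  have hre : re (inner 𝕜 (((c : 𝕜)⁻¹ • P - 1) x) x) = c⁻¹ * re (inner 𝕜 (P x) x) - ‖x‖ ^ 2 := by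
    rw [sub_apply, smul_apply, one_apply_eq_self, inner_sub_left, inner_smul_left, map_sub,
      ← ofReal_inv, conj_ofReal, re_ofReal_mul, inner_self_eq_norm_sq]
  have hfactor : c⁻¹ * re (inner 𝕜 (P x) x) - ‖x‖ ^ 2 =
      c⁻¹ * (re (inner 𝕜 (P x) x) - c * ‖x‖ ^ 2) := by
    field_simp
  rw [hre, hfactor, div_eq_inv_mul, mul_assoc, abs_le, ← mul_neg]
  constructor <;> refine mul_le_mul_of_nonneg_left ?_ (by positivity) <;>
    nlinarith [hcoer x, P.re_inner_apply_self_le x]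

end ContinuousLinearMap

open Filter in
/-- root-extraction step in the proof of Lemma 4.1.
A strictly coercive bounded self-adjoint operator `P` admits, for suitable `n ≥ 1`, a strictly
coercive self-adjoint `n`-th root `Q` with `‖I - Q‖ < 1/2`. -/
theorem stmt_18 {𝕜 : Type*} [RCLike 𝕜]
    {X : Type*} [NormedAddCommGroup X] [InnerProductSpace 𝕜 X] [CompleteSpace X]
    (P : X →L[𝕜] X) (hPsa : IsSelfAdjoint P)
    (m : ℝ) (hm : 0 < m)
    (hcoer : ∀ x : X, m * ‖x‖ ^ 2 ≤ RCLike.re (inner 𝕜 (P x) x : 𝕜)) :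
    ∃ (n : ℕ) (Q : X →L[𝕜] X), 1 ≤ n ∧ IsSelfAdjoint Q ∧ Q ^ n = P ∧
      (∃ m' : ℝ, 0 < m' ∧ ∀ x : X, m' * ‖x‖ ^ 2 ≤ RCLike.re (inner 𝕜 (Q x) x : 𝕜)) ∧
      ‖(1 : X →L[𝕜] X) - Q‖ < 1/2 := by
  have hc : 0 < ‖P‖ + m := by positivity
  have hT : ‖((‖P‖ + m : ℝ) : 𝕜)⁻¹ • P - 1‖ < 1 :=
    (ContinuousLinearMap.norm_inv_smul_sub_one_le hPsa hm hcoer).trans_lt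
      ((div_lt_one hc).mpr (lt_add_of_pos_right _ hm))
  obtain ⟨n, hn, hclose⟩ := ((eventually_ge_atTop 1).and
    ((tendsto_binomialRoot hc hT).eventually (Metric.ball_mem_nhds 1 one_half_pos))).exists
  rw [dist_eq_norm'] at hclose
  exact ⟨n, binomialRoot 𝕜 (‖P‖ + m) n P, hn, hPsa.binomialRoot _ _,
    binomialRoot_pow hc hT (Nat.one_le_iff_ne_zero.mp hn),
    ⟨_, by linarith, ContinuousLinearMap.one_sub_norm_one_sub_mul_sq_le_re_inner _⟩, hclose⟩
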